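/- arXiv:1501.01409 — 2 statements merged into one kernel-verified Lean document; each statement's English description precedes it below -/
import Mathlib

section
/- In the coupled observer error system, the transformed electrical error δμ = (L^e)^{-1} x̃^e is differentiable and satisfies (δμ)'(t) = − U(t)^{-1} [ U'(t) δμ(t) + L^m(t)ᵀ (H^m)ᵀ W^m H^m δη(t) ] for all t ≥ 0, where δη = x̃^m − L^m δμ; in particular the dynamics of δμ is driven only by the accumulated observability operator U' and by the decoupled mechanical error δη. -/
/-!
Since `Lᵉ` is a fundamental matrix of `x' = Aᵉ x`, differentiating `δμ = (Lᵉ)⁻¹ x̃ᵉ` cancels the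
drift `Aᵉ x̃ᵉ` exactly and leaves `δμ' = -U⁻¹ S`. The innovation `S` is then re-expressed through
`x̃ᵉ = Lᵉ δμ` and `x̃ᵐ = Lᵐ δμ + δη`, which splits it into `U' δμ` and a term in `δη` alone.
-/

open Matrix

namespace Matrix

section Calculus

variable {m n : Type*} [Fintype n] {t : ℝ}

theorem hasDerivAt_iff_forall_entry {f : ℝ → Matrix m n ℝ} {f' : Matrix m n ℝ} :
    HasDerivAt f f' t ↔ ∀ i j, HasDerivAt (fun s => f s i j) (f' i j) t :=
  hasDerivAt_pi.trans (forall_congr' fun _ => hasDerivAt_pi)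

theorem _root_.HasDerivAt.matrix_mulVec {M : ℝ → Matrix m n ℝ} {M' : Matrix m n ℝ}
    {v : ℝ → n → ℝ} {v' : n → ℝ} (hM : HasDerivAt M M' t) (hv : HasDerivAt v v' t) :
    HasDerivAt (fun s => M s *ᵥ v s) (M' *ᵥ v t + M t *ᵥ v') t := by
  rw [hasDerivAt_iff_forall_entry] at hM
  rw [hasDerivAt_pi] at hv ⊢
  intro i
  simp only [Pi.add_apply, mulVec, dotProduct, ← Finset.sum_add_distrib]
  exact HasDerivAt.fun_sum fun j _ => (hM i j).mul (hv j)

variable [DecidableEq n]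

theorem _root_.HasDerivAt.matrix_inv {f : ℝ → Matrix n n ℝ} {f' : Matrix n n ℝ}
    (hf : HasDerivAt f f' t) (hdet : IsUnit (f t).det) :
    HasDerivAt (fun s => (f s)⁻¹) (-((f t)⁻¹ * f' * (f t)⁻¹)) t := by
  let _ := Matrix.linftyOpNormedRing (n := n) (α := ℝ)
  let _ := Matrix.linftyOpNormedAlgebra (n := n) (R := ℝ) (α := ℝ)
  have : CompleteSpace (Matrix n n ℝ) := FiniteDimensional.complete ℝ _
  obtain ⟨u, hu⟩ := (isUnit_iff_isUnit_det _).mpr hdet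
  have hinv : HasFDerivAt Ring.inverse
      (-ContinuousLinearMap.mulLeftRight ℝ _ (f t)⁻¹ (f t)⁻¹) (f t) := by
    rw [← hu, ← coe_units_inv]
    exact hasFDerivAt_ringInverse u
  have h := hinv.comp_hasDerivAt t hf
  simp only [Function.comp_def, ← nonsing_inv_eq_ringInverse] at h
  -- the operator norm induces the product topology definitionally, so `h` is the claim for the
  -- default instances on matrices
  exact h

theorem hasDerivAt_inv_mulVec_of_fundamental {L : ℝ → Matrix n n ℝ} {A : Matrix n n ℝ}
    {x : ℝ → n → ℝ} {g : n → ℝ} (hL : HasDerivAt L (A * L t) t) (hdet : IsUnit (L t).det)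
    (hx : HasDerivAt x (A *ᵥ x t - L t *ᵥ g) t) :
    HasDerivAt (fun s => (L s)⁻¹ *ᵥ x s) (-g) t := by
  convert (hL.matrix_inv hdet).matrix_mulVec hx using 1
  rw [mul_assoc, mul_assoc, mul_nonsing_inv _ hdet, mul_one, mulVec_sub, mulVec_mulVec,
    mulVec_mulVec, nonsing_inv_mul _ hdet, one_mulVec, neg_mulVec]
  abel

end Calculus

theorem mulVec_add_mulVec_eq_inv_coords {k l n R : Type*} [Fintype l] [Fintype n] [DecidableEq n]
    [CommRing R] {L : Matrix n n R} (hL : IsUnit L.det) (E : Matrix k n R) (F : Matrix k l R)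
    (M : Matrix l n R) (x : n → R) (y : l → R) :
    E *ᵥ x + F *ᵥ y = (E * L + F * M) *ᵥ (L⁻¹ *ᵥ x) + F *ᵥ (y - M *ᵥ (L⁻¹ *ᵥ x)) := by
  simp only [mulVec_sub, mulVec_mulVec]
  rw [Matrix.add_mul, Matrix.mul_assoc E, mul_nonsing_inv _ hL, Matrix.mul_one, add_mulVec,
    Matrix.mul_assoc]
  abel

end Matrix

theorem coupled_observer_elec_error_dynamics_general
    (ne nm me mm : ℕ)
    (Ae : ℝ → Matrix (Fin ne) (Fin ne) ℝ)
    (He : Matrix (Fin me) (Fin ne) ℝ) (Hm : Matrix (Fin mm) (Fin nm) ℝ)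
    (We : Matrix (Fin me) (Fin me) ℝ) (Wm : Matrix (Fin mm) (Fin mm) ℝ)
    (Le : ℝ → Matrix (Fin ne) (Fin ne) ℝ)
    (hLe : ∀ t, 0 ≤ t → ∀ i j, HasDerivAt (fun s => Le s i j) ((Ae t * Le t) i j) t)
    (hLeInv : ∀ t, 0 ≤ t → IsUnit (Le t).det)
    (Lm : ℝ → Matrix (Fin nm) (Fin ne) ℝ)
    (U : ℝ → Matrix (Fin ne) (Fin ne) ℝ)
    (xe : ℝ → Fin ne → ℝ) (xm : ℝ → Fin nm → ℝ)
    (hxe : ∀ t, 0 ≤ t → ∀ i, HasDerivAt (fun s => xe s i)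
      (((Ae t).mulVec (xe t) - (Le t * (U t)⁻¹).mulVec
        (((Le t)ᵀ * Heᵀ * We * He).mulVec (xe t)
          + ((Lm t)ᵀ * Hmᵀ * Wm * Hm).mulVec (xm t))) i) t)
    :
    ∀ t, 0 ≤ t → ∀ i, HasDerivAt
      (fun s => ((Le s)⁻¹.mulVec (xe s)) i)
      ((-( (U t)⁻¹.mulVec
        (((Le t)ᵀ * Heᵀ * We * He * Le t + (Lm t)ᵀ * Hmᵀ * Wm * Hm * Lm t).mulVec
            ((Le t)⁻¹.mulVec (xe t))
          + ((Lm t)ᵀ * Hmᵀ * Wm * Hm).mulVec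
            (xm t - (Lm t).mulVec ((Le t)⁻¹.mulVec (xe t)))))) i) t := by
  intro t ht i
  have hLe' : HasDerivAt Le (Ae t * Le t) t := hasDerivAt_iff_forall_entry.mpr (hLe t ht)
  have hxe' := hasDerivAt_pi.mpr (hxe t ht)
  rw [← mulVec_mulVec] at hxe'
  rw [← mulVec_add_mulVec_eq_inv_coords (hLeInv t ht)]
  exact hasDerivAt_pi.mp (hasDerivAt_inv_mulVec_of_fundamental hLe' (hLeInv t ht) hxe') i

/-- Coupled observer error system: the transformed electrical error
`δμ = (Lᵉ)⁻¹ x̃ᵉ` is differentiable and satisfies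
`(δμ)' = − U⁻¹ ( U' δμ + (Lᵐ)ᵀ (Hᵐ)ᵀ Wᵐ Hᵐ δη )`, where
`U' = (Lᵉ)ᵀ(Hᵉ)ᵀ Wᵉ Hᵉ Lᵉ + (Lᵐ)ᵀ(Hᵐ)ᵀ Wᵐ Hᵐ Lᵐ` and `δη = x̃ᵐ − Lᵐ δμ`. -/
theorem coupled_observer_elec_error_dynamics
    (ne nm me mm : ℕ) (hne : 0 < ne) (hnm : 0 < nm) (hme : 0 < me) (hmm : 0 < mm)
    (Ae : ℝ → Matrix (Fin ne) (Fin ne) ℝ)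
    (Am : ℝ → Matrix (Fin nm) (Fin nm) ℝ)
    (B : ℝ → Matrix (Fin nm) (Fin ne) ℝ)
    (K : ℝ → Matrix (Fin nm) (Fin mm) ℝ)
    (hAe : ∀ i j, Continuous fun t => Ae t i j)
    (hAm : ∀ i j, Continuous fun t => Am t i j)
    (hB : ∀ i j, Continuous fun t => B t i j)
    (hK : ∀ i j, Continuous fun t => K t i j)
    (He : Matrix (Fin me) (Fin ne) ℝ) (Hm : Matrix (Fin mm) (Fin nm) ℝ)
    (We : Matrix (Fin me) (Fin me) ℝ) (Wm : Matrix (Fin mm) (Fin mm) ℝ)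
    (hWe : We.PosSemidef) (hWm : Wm.PosSemidef)
    (Le : ℝ → Matrix (Fin ne) (Fin ne) ℝ)
    (hLe : ∀ t, 0 ≤ t → ∀ i j, HasDerivAt (fun s => Le s i j) ((Ae t * Le t) i j) t)
    (hLe0 : Le 0 = 1)
    (hLeInv : ∀ t, 0 ≤ t → IsUnit (Le t).det)
    (Lm : ℝ → Matrix (Fin nm) (Fin ne) ℝ)
    (hLm : ∀ t, 0 ≤ t → ∀ i j, HasDerivAt (fun s => Lm s i j)
      (((Am t - K t * Hm) * Lm t + B t * Le t) i j) t)
    (hLm0 : Lm 0 = 0)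
    (U : ℝ → Matrix (Fin ne) (Fin ne) ℝ)
    (hU : ∀ t, 0 ≤ t → ∀ i j, HasDerivAt (fun s => U s i j)
      (((Le t)ᵀ * Heᵀ * We * He * Le t + (Lm t)ᵀ * Hmᵀ * Wm * Hm * Lm t) i j) t)
    (hU0 : (U 0).PosDef)
    (hUpos : ∀ t, 0 ≤ t → (U t).PosDef)
    (xe : ℝ → Fin ne → ℝ) (xm : ℝ → Fin nm → ℝ)
    (hxe : ∀ t, 0 ≤ t → ∀ i, HasDerivAt (fun s => xe s i)
      (((Ae t).mulVec (xe t) - (Le t * (U t)⁻¹).mulVec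
        (((Le t)ᵀ * Heᵀ * We * He).mulVec (xe t)
          + ((Lm t)ᵀ * Hmᵀ * Wm * Hm).mulVec (xm t))) i) t)
    (hxm : ∀ t, 0 ≤ t → ∀ i, HasDerivAt (fun s => xm s i)
      (((Am t - K t * Hm).mulVec (xm t) + (B t).mulVec (xe t)
        - (Lm t * (U t)⁻¹).mulVec
          (((Le t)ᵀ * Heᵀ * We * He).mulVec (xe t)
            + ((Lm t)ᵀ * Hmᵀ * Wm * Hm).mulVec (xm t))) i) t)
    :
    ∀ t, 0 ≤ t → ∀ i, HasDerivAt
      (fun s => ((Le s)⁻¹.mulVec (xe s)) i)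
      ((-( (U t)⁻¹.mulVec
        (((Le t)ᵀ * Heᵀ * We * He * Le t + (Lm t)ᵀ * Hmᵀ * Wm * Hm * Lm t).mulVec
            ((Le t)⁻¹.mulVec (xe t))
          + ((Lm t)ᵀ * Hmᵀ * Wm * Hm).mulVec
            (xm t - (Lm t).mulVec ((Le t)⁻¹.mulVec (xe t)))))) i) t :=
  coupled_observer_elec_error_dynamics_general ne nm me mm Ae He Hm We Wm Le hLe hLeInv Lm U xe xm
    hxe
end

section
/- In the coupled observer error system, if the initial mechanical error vanishes, x̃^m(0) = 0 (so that δη(0) = 0, since L^m(0) = 0), then δη(t) = 0 for all t ≥ 0 and the transformed electrical error is given explicitly by δμ(t) = U(t)^{-1} U(0) δμ(0) for all t ≥ 0. -/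
open Matrix Set Filter Topology

/-!
Dividing out the fundamental matrix `Lᵉ` turns the electrical error equation into
`δμ' = -U⁻¹ S`. Substituting this into the mechanical one, the coupling terms cancel and `δη`
solves the homogeneous linear equation `δη' = (Aᵐ - K Hᵐ) δη`, so it stays zero when it starts
at zero. Once `δη = 0`, the innovation is `S = U' δμ`, hence `(U δμ)' = U' δμ + U δμ' = 0` and
`U δμ` is constant.
-/

section Calculus

variable {𝕜 : Type*} [NontriviallyNormedField 𝕜] {m n : Type*} [Fintype n]

theorem differentiableAt_matrix_det [DecidableEq n] {M : 𝕜 → Matrix n n 𝕜} {t : 𝕜}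
    (hM : ∀ i j, DifferentiableAt 𝕜 (fun s => M s i j) t) :
    DifferentiableAt 𝕜 (fun s => (M s).det) t := by
  simp only [det_apply']
  exact .fun_sum fun σ _ => (DifferentiableAt.fun_finsetProd fun i _ => hM (σ i) i).const_mul _

theorem differentiableAt_matrix_inv_apply [DecidableEq n] {M : 𝕜 → Matrix n n 𝕜} {t : 𝕜}
    (hM : ∀ i j, DifferentiableAt 𝕜 (fun s => M s i j) t) (ht : IsUnit (M t).det) (i j : n) :
    DifferentiableAt 𝕜 (fun s => (M s)⁻¹ i j) t := by
  have hadj : DifferentiableAt 𝕜 (fun s => (M s).adjugate i j) t := by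
    simp only [adjugate_apply]
    refine differentiableAt_matrix_det fun a b => ?_
    rcases eq_or_ne a j with rfl | hne
    · simp [updateRow_apply]
    · simpa [updateRow_apply, hne] using hM a b
  simp only [inv_def, Matrix.smul_apply, Ring.inverse_eq_inv', smul_eq_mul]
  exact ((differentiableAt_matrix_det hM).inv ht.ne_zero).mul hadj

theorem hasDerivAt_mulVec {M : 𝕜 → Matrix m n 𝕜} {M' : Matrix m n 𝕜} {w : 𝕜 → n → 𝕜}
    {w' : n → 𝕜} {t : 𝕜} (hM : ∀ i j, HasDerivAt (fun s => M s i j) (M' i j) t)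
    (hw : HasDerivAt w w' t) :
    HasDerivAt (fun s => M s *ᵥ w s) (M' *ᵥ w t + M t *ᵥ w') t := by
  refine hasDerivAt_pi.2 fun i => ?_
  simp only [mulVec, dotProduct, Pi.add_apply, ← Finset.sum_add_distrib]
  exact .fun_sum fun j _ => by
    simpa [mul_comm] using (hM i j).fun_mul (hasDerivAt_pi.1 hw j)

theorem hasDerivAt_inv_mulVec [DecidableEq n] {L : 𝕜 → Matrix n n 𝕜} {L' : Matrix n n 𝕜}
    {x : 𝕜 → n → 𝕜} {x' : n → 𝕜} {t : 𝕜}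
    (hL : ∀ i j, HasDerivAt (fun s => L s i j) (L' i j) t) (ht : IsUnit (L t).det)
    (hx : HasDerivAt x x' t) :
    HasDerivAt (fun s => (L s)⁻¹ *ᵥ x s) ((L t)⁻¹ *ᵥ (x' - L' *ᵥ ((L t)⁻¹ *ᵥ x t))) t := by
  set q := fun s => (L s)⁻¹ *ᵥ x s
  obtain ⟨q', hq⟩ : ∃ q', HasDerivAt q q' t := ⟨_, hasDerivAt_mulVec
    (fun i j => (differentiableAt_matrix_inv_apply (fun i j => (hL i j).differentiableAt)
      ht i j).hasDerivAt) hx⟩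
  have hLq : (fun s => L s *ᵥ q s) =ᶠ[𝓝 t] x := by
    have hdet : ContinuousAt (fun s => (L s).det) t :=
      (differentiableAt_matrix_det fun i j => (hL i j).differentiableAt).continuousAt
    filter_upwards [hdet.eventually_ne ht.ne_zero] with s hs
    simp [q, mulVec_mulVec, mul_nonsing_inv _ (Ne.isUnit hs)]
  have hx' : L' *ᵥ q t + L t *ᵥ q' = x' :=
    ((hasDerivAt_mulVec hL hq).congr_of_eventuallyEq hLq.symm).unique hx
  rw [← hx', add_sub_cancel_left, mulVec_mulVec, nonsing_inv_mul _ ht, one_mulVec]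
  exact hq

theorem hasDerivAt_inv_mulVec_of_fundamental [DecidableEq n] {A L : 𝕜 → Matrix n n 𝕜}
    {x : 𝕜 → n → 𝕜} {g : n → 𝕜} {t : 𝕜}
    (hL : ∀ i j, HasDerivAt (fun s => L s i j) ((A t * L t) i j) t) (ht : IsUnit (L t).det)
    (hx : HasDerivAt x (A t *ᵥ x t + L t *ᵥ g) t) :
    HasDerivAt (fun s => (L s)⁻¹ *ᵥ x s) g t := by
  convert hasDerivAt_inv_mulVec hL ht hx using 1
  rw [mulVec_mulVec _ (A t * L t), mul_assoc, mul_nonsing_inv _ ht, mul_one, add_sub_cancel_left,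
    mulVec_mulVec, nonsing_inv_mul _ ht, one_mulVec]

theorem hasDerivAt_sub_mulVec [Fintype m] {A : Matrix m m 𝕜} {C : Matrix m n 𝕜}
    {L : 𝕜 → Matrix m n 𝕜} {x : 𝕜 → m → 𝕜} {z : 𝕜 → n → 𝕜} {g : n → 𝕜} {t : 𝕜}
    (hL : ∀ i j, HasDerivAt (fun s => L s i j) ((A * L t + C) i j) t)
    (hz : HasDerivAt z g t) (hx : HasDerivAt x (A *ᵥ x t + C *ᵥ z t + L t *ᵥ g) t) :
    HasDerivAt (fun s => x s - L s *ᵥ z s) (A *ᵥ (x t - L t *ᵥ z t)) t := by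
  refine (hx.sub (hasDerivAt_mulVec hL hz)).congr_deriv ?_
  rw [add_mulVec, mulVec_sub, mulVec_mulVec]
  abel

end Calculus

section LinearODE

variable {n : Type*} [Fintype n]

theorem eq_zero_of_hasDerivAt_mulVec {A : ℝ → Matrix n n ℝ} (hA : Continuous A)
    {η : ℝ → n → ℝ} {a : ℝ} (hη : ∀ t, a ≤ t → HasDerivAt η (A t *ᵥ η t) t) (ha : η a = 0) :
    ∀ t, a ≤ t → η t = 0 := by
  -- the ℓ∞ operator norm is the one compatible with the sup norm on `n → ℝ`
  let _ := Matrix.linftyOpNormedAddCommGroup (m := n) (n := n) (α := ℝ)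
  intro T hT
  obtain ⟨C, hC⟩ := (isCompact_Icc (a := a) (b := T)).exists_bound_of_continuousOn
    (continuous_norm.comp hA).continuousOn
  have hlip : ∀ t ∈ Ico a T, LipschitzOnWith C.toNNReal (fun y => A t *ᵥ y) univ := by
    refine fun t ht => (LipschitzWith.of_dist_le_mul fun y z => ?_).lipschitzOnWith
    rw [dist_eq_norm, dist_eq_norm, ← mulVec_sub]
    refine (linfty_opNorm_mulVec _ _).trans (mul_le_mul_of_nonneg_right ?_ (norm_nonneg _))
    exact ((le_abs_self _).trans (hC t (Ico_subset_Icc_self ht))).trans (Real.le_coe_toNNReal C)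
  refine ODE_solution_unique_of_mem_Icc_right hlip
    (fun t ht => (hη t ht.1).continuousAt.continuousWithinAt)
    (fun t ht => (hη t ht.1).hasDerivWithinAt) (fun _ _ => mem_univ _) continuousOn_const
    (fun t _ => by simpa using hasDerivWithinAt_const t (Ici t) (0 : n → ℝ))
    (fun _ _ => mem_univ _) ha (right_mem_Icc.2 hT)

theorem eq_inv_mul_mulVec_of_hasDerivAt [DecidableEq n] {U G : ℝ → Matrix n n ℝ}
    {z : ℝ → n → ℝ} {a : ℝ}
    (hU : ∀ t, a ≤ t → ∀ i j, HasDerivAt (fun s => U s i j) (G t i j) t)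
    (hUdet : ∀ t, a ≤ t → IsUnit (U t).det)
    (hz : ∀ t, a ≤ t → HasDerivAt z (-((U t)⁻¹ *ᵥ (G t *ᵥ z t))) t) :
    ∀ t, a ≤ t → z t = ((U t)⁻¹ * U a) *ᵥ z a := by
  have hUz : ∀ t, a ≤ t → HasDerivAt (fun s => U s *ᵥ z s) 0 t := fun t ht => by
    convert hasDerivAt_mulVec (hU t ht) (hz t ht) using 1
    rw [mulVec_neg, mulVec_mulVec, mul_nonsing_inv _ (hUdet t ht), one_mulVec, add_neg_cancel]
  intro t ht
  have hconst : U t *ᵥ z t = U a *ᵥ z a :=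
    constant_of_has_deriv_right_zero (fun s hs => (hUz s hs.1).continuousAt.continuousWithinAt)
      (fun s hs => (hUz s hs.1).hasDerivWithinAt) t (right_mem_Icc.2 ht)
  rw [← mulVec_mulVec, ← hconst, mulVec_mulVec, nonsing_inv_mul _ (hUdet t ht), one_mulVec]

end LinearODE

theorem coupled_observer_zero_mech_error_general
    (ne nm me mm : ℕ)
    (Ae : ℝ → Matrix (Fin ne) (Fin ne) ℝ)
    (Am : ℝ → Matrix (Fin nm) (Fin nm) ℝ)
    (B : ℝ → Matrix (Fin nm) (Fin ne) ℝ)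
    (K : ℝ → Matrix (Fin nm) (Fin mm) ℝ)
    (hAm : ∀ i j, Continuous fun t => Am t i j)
    (hK : ∀ i j, Continuous fun t => K t i j)
    (He : Matrix (Fin me) (Fin ne) ℝ) (Hm : Matrix (Fin mm) (Fin nm) ℝ)
    (We : Matrix (Fin me) (Fin me) ℝ) (Wm : Matrix (Fin mm) (Fin mm) ℝ)
    (Le : ℝ → Matrix (Fin ne) (Fin ne) ℝ)
    (hLe : ∀ t, 0 ≤ t → ∀ i j, HasDerivAt (fun s => Le s i j) ((Ae t * Le t) i j) t)
    (hLeInv : ∀ t, 0 ≤ t → IsUnit (Le t).det)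
    (Lm : ℝ → Matrix (Fin nm) (Fin ne) ℝ)
    (hLm : ∀ t, 0 ≤ t → ∀ i j, HasDerivAt (fun s => Lm s i j)
      (((Am t - K t * Hm) * Lm t + B t * Le t) i j) t)
    (hLm0 : Lm 0 = 0)
    (U : ℝ → Matrix (Fin ne) (Fin ne) ℝ)
    (hU : ∀ t, 0 ≤ t → ∀ i j, HasDerivAt (fun s => U s i j)
      (((Le t)ᵀ * Heᵀ * We * He * Le t + (Lm t)ᵀ * Hmᵀ * Wm * Hm * Lm t) i j) t)
    (hUpos : ∀ t, 0 ≤ t → (U t).PosDef)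
    (xe : ℝ → Fin ne → ℝ) (xm : ℝ → Fin nm → ℝ)
    (hxe : ∀ t, 0 ≤ t → ∀ i, HasDerivAt (fun s => xe s i)
      (((Ae t).mulVec (xe t) - (Le t * (U t)⁻¹).mulVec
        (((Le t)ᵀ * Heᵀ * We * He).mulVec (xe t)
          + ((Lm t)ᵀ * Hmᵀ * Wm * Hm).mulVec (xm t))) i) t)
    (hxm : ∀ t, 0 ≤ t → ∀ i, HasDerivAt (fun s => xm s i)
      (((Am t - K t * Hm).mulVec (xm t) + (B t).mulVec (xe t)
        - (Lm t * (U t)⁻¹).mulVec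
          (((Le t)ᵀ * Heᵀ * We * He).mulVec (xe t)
            + ((Lm t)ᵀ * Hmᵀ * Wm * Hm).mulVec (xm t))) i) t)
    (hxm0 : xm 0 = 0) :
    ∀ t, 0 ≤ t →
      (xm t - (Lm t).mulVec ((Le t)⁻¹.mulVec (xe t)) = 0)
      ∧ ((Le t)⁻¹.mulVec (xe t)
          = ((U t)⁻¹ * U 0).mulVec ((Le 0)⁻¹.mulVec (xe 0))) := by
  set δμ : ℝ → Fin ne → ℝ := fun s => (Le s)⁻¹ *ᵥ xe s
  set S : ℝ → Fin ne → ℝ := fun s =>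
    ((Le s)ᵀ * Heᵀ * We * He) *ᵥ xe s + ((Lm s)ᵀ * Hmᵀ * Wm * Hm) *ᵥ xm s
  have hxe_eq : ∀ t, 0 ≤ t → Le t *ᵥ δμ t = xe t := fun t ht => by
    simp only [δμ, mulVec_mulVec, mul_nonsing_inv _ (hLeInv t ht), one_mulVec]
  have hδμ : ∀ t, 0 ≤ t → HasDerivAt δμ (-((U t)⁻¹ *ᵥ S t)) t := fun t ht =>
    hasDerivAt_inv_mulVec_of_fundamental (hLe t ht) (hLeInv t ht) <| by
      simpa only [mulVec_neg, mulVec_mulVec, ← sub_eq_add_neg] using hasDerivAt_pi.2 (hxe t ht)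
  have hδη : ∀ t, 0 ≤ t → HasDerivAt (fun s => xm s - Lm s *ᵥ δμ s)
      ((Am t - K t * Hm) *ᵥ (xm t - Lm t *ᵥ δμ t)) t := fun t ht =>
    hasDerivAt_sub_mulVec (hLm t ht) (hδμ t ht) <| by
      refine (hasDerivAt_pi.2 (hxm t ht)).congr_deriv ?_
      rw [← mulVec_mulVec (δμ t), hxe_eq t ht, mulVec_neg, mulVec_mulVec, sub_eq_add_neg]
  have hA : Continuous fun t => Am t - K t * Hm :=
    (continuous_matrix hAm).sub ((continuous_matrix hK).matrix_mul continuous_const)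
  have hδη0 := eq_zero_of_hasDerivAt_mulVec hA hδη (by simp [hxm0, hLm0])
  have hS : ∀ t, 0 ≤ t → S t = ((Le t)ᵀ * Heᵀ * We * He * Le t
      + (Lm t)ᵀ * Hmᵀ * Wm * Hm * Lm t) *ᵥ δμ t := fun t ht => by
    simp only [S]
    rw [sub_eq_zero.1 (hδη0 t ht), ← hxe_eq t ht, add_mulVec, ← mulVec_mulVec (δμ t),
      ← mulVec_mulVec (δμ t)]
  refine fun t ht => ⟨hδη0 t ht, eq_inv_mul_mulVec_of_hasDerivAt hU
    (fun t ht => (isUnit_iff_isUnit_det _).1 (hUpos t ht).isUnit)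
    (fun t ht => hS t ht ▸ hδμ t ht) t ht⟩

/-- Coupled observer error system: if the initial mechanical error vanishes,
`x̃ᵐ(0) = 0` (so `δη(0) = 0` since `Lᵐ(0) = 0`), then `δη ≡ 0` on `[0,∞)` and
`δμ(t) = U(t)⁻¹ U(0) δμ(0)`, where `δμ = (Lᵉ)⁻¹ x̃ᵉ` and `δη = x̃ᵐ − Lᵐ δμ`. -/
theorem coupled_observer_zero_mech_error
    (ne nm me mm : ℕ) (hne : 0 < ne) (hnm : 0 < nm) (hme : 0 < me) (hmm : 0 < mm)
    (Ae : ℝ → Matrix (Fin ne) (Fin ne) ℝ)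
    (Am : ℝ → Matrix (Fin nm) (Fin nm) ℝ)
    (B : ℝ → Matrix (Fin nm) (Fin ne) ℝ)
    (K : ℝ → Matrix (Fin nm) (Fin mm) ℝ)
    (hAe : ∀ i j, Continuous fun t => Ae t i j)
    (hAm : ∀ i j, Continuous fun t => Am t i j)
    (hB : ∀ i j, Continuous fun t => B t i j)
    (hK : ∀ i j, Continuous fun t => K t i j)
    (He : Matrix (Fin me) (Fin ne) ℝ) (Hm : Matrix (Fin mm) (Fin nm) ℝ)
    (We : Matrix (Fin me) (Fin me) ℝ) (Wm : Matrix (Fin mm) (Fin mm) ℝ)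
    (hWe : We.PosSemidef) (hWm : Wm.PosSemidef)
    (Le : ℝ → Matrix (Fin ne) (Fin ne) ℝ)
    (hLe : ∀ t, 0 ≤ t → ∀ i j, HasDerivAt (fun s => Le s i j) ((Ae t * Le t) i j) t)
    (hLe0 : Le 0 = 1)
    (hLeInv : ∀ t, 0 ≤ t → IsUnit (Le t).det)
    (Lm : ℝ → Matrix (Fin nm) (Fin ne) ℝ)
    (hLm : ∀ t, 0 ≤ t → ∀ i j, HasDerivAt (fun s => Lm s i j)
      (((Am t - K t * Hm) * Lm t + B t * Le t) i j) t)
    (hLm0 : Lm 0 = 0)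
    (U : ℝ → Matrix (Fin ne) (Fin ne) ℝ)
    (hU : ∀ t, 0 ≤ t → ∀ i j, HasDerivAt (fun s => U s i j)
      (((Le t)ᵀ * Heᵀ * We * He * Le t + (Lm t)ᵀ * Hmᵀ * Wm * Hm * Lm t) i j) t)
    (hU0 : (U 0).PosDef)
    (hUpos : ∀ t, 0 ≤ t → (U t).PosDef)
    (xe : ℝ → Fin ne → ℝ) (xm : ℝ → Fin nm → ℝ)
    (hxe : ∀ t, 0 ≤ t → ∀ i, HasDerivAt (fun s => xe s i)
      (((Ae t).mulVec (xe t) - (Le t * (U t)⁻¹).mulVec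
        (((Le t)ᵀ * Heᵀ * We * He).mulVec (xe t)
          + ((Lm t)ᵀ * Hmᵀ * Wm * Hm).mulVec (xm t))) i) t)
    (hxm : ∀ t, 0 ≤ t → ∀ i, HasDerivAt (fun s => xm s i)
      (((Am t - K t * Hm).mulVec (xm t) + (B t).mulVec (xe t)
        - (Lm t * (U t)⁻¹).mulVec
          (((Le t)ᵀ * Heᵀ * We * He).mulVec (xe t)
            + ((Lm t)ᵀ * Hmᵀ * Wm * Hm).mulVec (xm t))) i) t)
    (hxm0 : xm 0 = 0) :
    ∀ t, 0 ≤ t →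
      (xm t - (Lm t).mulVec ((Le t)⁻¹.mulVec (xe t)) = 0)
      ∧ ((Le t)⁻¹.mulVec (xe t)
          = ((U t)⁻¹ * U 0).mulVec ((Le 0)⁻¹.mulVec (xe 0))) :=
  coupled_observer_zero_mech_error_general ne nm me mm Ae Am B K hAm hK He Hm We Wm Le hLe hLeInv Lm
    hLm hLm0 U hU hUpos xe xm hxe hxm hxm0
end
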